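/- Weak duality for the vector Lagrangian: with φ(u*) := Inf ⋃_{x∈X} L(x,u*) where L(x,u*) = F(x) + Inf ⋃_{u∈G(x)+D} ⟨u*,u⟩{c}, one has Sup ⋃_{u*∈U*} φ(u*) ≼ Inf ⋃_{x∈S} F(x), where S = { x : G(x) ∩ (−D) ≠ ∅ }. -/

import Mathlib

open Set Pointwise
open scoped Classical

/-- The extended space `Y ∪ {-∞, +∞}`. -/
abbrev EY (Y : Type*) := WithBot (WithTop Y)

/-- Embedding of `Y` into the extended space. -/
def toE {Y : Type*} (y : Y) : EY Y := ((y : WithTop Y) : EY Y)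

/-- The element `+∞` of the extended space. -/
def posInf (Y : Type*) : EY Y := ((⊤ : WithTop Y) : EY Y)

variable {Y : Type*} [AddCommGroup Y] [Module ℝ Y] [TopologicalSpace Y]
  [IsTopologicalAddGroup Y] [ContinuousSMul ℝ Y]

/-- Weakly minimal elements with respect to the cone `C`. -/
def wMinSet (C A : Set Y) : Set Y := {y ∈ A | ({y} - interior C) ∩ A = ∅}

/-- Weakly maximal elements with respect to the cone `C`. -/
def wMaxSet (C A : Set Y) : Set Y := {y ∈ A | ({y} + interior C) ∩ A = ∅}

/-- Upper closure (w.r.t. `C`) of a subset of the extended space. -/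
noncomputable def upCloE (C : Set Y) (A : Set (EY Y)) : Set Y :=
  if (⊥ : EY Y) ∈ A then univ
  else if A = {posInf Y} then ∅
  else closure (toE ⁻¹' A + C)

/-- Infimal set (w.r.t. `C`) of a subset of the extended space. -/
noncomputable def infSE (C : Set Y) (A : Set (EY Y)) : Set (EY Y) :=
  if upCloE C A = univ then {⊥}
  else if upCloE C A = ∅ then {posInf Y}
  else toE '' wMinSet C (upCloE C A)

/-- Lower closure (w.r.t. `C`) of a subset of the extended space. -/
noncomputable def loCloE (C : Set Y) (A : Set (EY Y)) : Set Y :=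
  if posInf Y ∈ A then univ
  else if A = {(⊥ : EY Y)} then ∅
  else closure (toE ⁻¹' A - C)

/-- Supremal set (w.r.t. `C`) of a subset of the extended space. -/
noncomputable def supSE (C : Set Y) (A : Set (EY Y)) : Set (EY Y) :=
  if loCloE C A = univ then {posInf Y}
  else if loCloE C A = ∅ then {(⊥ : EY Y)}
  else toE '' wMaxSet C (loCloE C A)

variable {X U : Type*} [AddCommGroup X] [Module ℝ X]
  [AddCommGroup U] [Module ℝ U] [TopologicalSpace U] [IsTopologicalAddGroup U]
  [ContinuousSMul ℝ U] [T2Space U] [LocallyConvexSpace ℝ U]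

/-- The Lagrangian of the primal problem, for the fixed vector `c ∈ int C`. -/
noncomputable def lagr (C : Set Y) (c : Y) (F : X → Set (EY Y)) (G : X → Set U)
    (D : Set U) (x : X) (u' : U →L[ℝ] ℝ) : Set (EY Y) :=
  F x + infSE C (⋃ u ∈ G x + D, ({toE (u' u • c)} : Set (EY Y)))

/-- The dual objective function. -/
noncomputable def dualObj (C : Set Y) (c : Y) (F : X → Set (EY Y)) (G : X → Set U)
    (D : Set U) (u' : U →L[ℝ] ℝ) : Set (EY Y) :=
  infSE C (⋃ x : X, lagr C c F G D x u')

/-- The feasible set `S = {x : G(x) ∩ (-D) ≠ ∅}`. -/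
def feas (G : X → Set U) (D : Set U) : Set X := {x | (G x ∩ (-D)).Nonempty}

/-- The perturbation map `W`. -/
noncomputable def pertW (C : Set Y) (F : X → Set (EY Y)) (G : X → Set U)
    (D : Set U) (u : U) : Set (EY Y) :=
  infSE C (⋃ x ∈ {x : X | (G x ∩ (-D - {u})).Nonempty}, F x)

/-!
For a feasible `x` some `u ∈ G x` lies in `-D`, so `0 ∈ G x + D` and `0` belongs to the upper
closure of `Inf ⋃_{u ∈ G x + D} ⟨u*, u⟩ c`; adding this to `F x` shows that, for every `u*`, the
upper closure of the primal values is contained in that of the Lagrangian values. A point of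
`φ(u*)` is weakly minimal in the latter set, so it never lies in `y + int C` for a primal
point `y`. Hence no primal point is interior to the lower closure of the dual values, and every
such point is dominated by a weakly maximal element of that lower closure.

Both domination steps (for `Inf` and for `Sup`) come from one observation: if `B` is closed,
`B + C ⊆ B` and `B ≠ Y`, then `{s | b - s • c ∈ B}` is empty or a closed half-line `s ≤ s₀`,
and `b - s₀ • c` is weakly minimal in `B`.
-/

open Filter Topology

lemma toE_injective {E : Type*} : Function.Injective (toE (Y := E)) := by
  intro a b h
  simpa [toE] using h

lemma toE_ne_bot {E : Type*} (y : E) : toE y ≠ ⊥ := by simp [toE]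

lemma toE_ne_posInf {E : Type*} (y : E) : toE y ≠ posInf E := by simp [toE, posInf]

lemma toE_add {E : Type*} [Add E] (y z : E) : toE (y + z) = toE y + toE z := by simp [toE]

section Closures

variable {E : Type*} [AddCommGroup E] [TopologicalSpace E] {C : Set E} {A A' : Set (EY E)}

lemma isClosed_upCloE (C : Set E) (A : Set (EY E)) : IsClosed (upCloE C A) := by
  unfold upCloE
  split_ifs
  exacts [isClosed_univ, isClosed_empty, isClosed_closure]

lemma upCloE_of_bot_mem (h : ⊥ ∈ A) : upCloE C A = univ := if_pos h

lemma upCloE_singleton_posInf : upCloE C {posInf E} = ∅ := by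
  have hbot : (⊥ : EY E) ∉ ({posInf E} : Set (EY E)) :=
    fun h => WithBot.bot_ne_coe (mem_singleton_iff.1 h)
  rw [upCloE, if_neg hbot, if_pos rfl]

lemma upCloE_image_toE (S : Set E) : upCloE C (toE '' S) = closure (S + C) := by
  have hbot : ⊥ ∉ toE '' S := fun ⟨y, _, hy⟩ => toE_ne_bot y hy
  have htop : toE '' S ≠ {posInf E} := fun h => by
    obtain ⟨y, _, hy⟩ := h.symm ▸ mem_singleton (posInf E)
    exact toE_ne_posInf y hy
  rw [upCloE, if_neg hbot, if_neg htop, preimage_image_eq S toE_injective]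

lemma closure_preimage_add_subset_upCloE (C : Set E) (A : Set (EY E)) :
    closure (toE ⁻¹' A + C) ⊆ upCloE C A := by
  unfold upCloE
  split_ifs with hbot htop
  · exact subset_univ _
  · have hpre : toE ⁻¹' {posInf E} = ∅ :=
      eq_empty_of_forall_notMem fun y hy => toE_ne_posInf y hy
    simp [htop, hpre]
  · exact Subset.rfl

lemma upCloE_mono (h : A ⊆ A') : upCloE C A ⊆ upCloE C A' := by
  conv_lhs => unfold upCloE
  split_ifs with hbot htop
  · rw [upCloE_of_bot_mem (h hbot)]
  · exact empty_subset _
  · exact (closure_mono (add_subset_add_right (preimage_mono h))).trans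
      (closure_preimage_add_subset_upCloE C A')

lemma nonempty_of_mem_upCloE {y : E} (hy : y ∈ upCloE C A) : A.Nonempty := by
  refine nonempty_iff_ne_empty.2 fun hA => ?_
  rw [hA, upCloE, if_neg (notMem_empty _), if_neg (singleton_nonempty _).ne_empty.symm] at hy
  simp at hy

lemma isClosed_loCloE (C : Set E) (A : Set (EY E)) : IsClosed (loCloE C A) := by
  unfold loCloE
  split_ifs
  exacts [isClosed_univ, isClosed_empty, isClosed_closure]

lemma loCloE_subset_closure (h : posInf E ∉ A) : loCloE C A ⊆ closure (toE ⁻¹' A - C) := by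
  rw [loCloE, if_neg h]
  split_ifs
  exacts [empty_subset _, Subset.rfl]

lemma sub_notMem_interior_of_mem_infSE {y z : E} (hz : toE z ∈ infSE C A)
    (hy : y ∈ upCloE C A) : z - y ∉ interior C := by
  unfold infSE at hz
  split_ifs at hz
  · exact absurd (mem_singleton_iff.1 hz) (toE_ne_bot z)
  · exact absurd (mem_singleton_iff.1 hz) (toE_ne_posInf z)
  · obtain ⟨w, hw, hwz⟩ := hz
    rw [toE_injective hwz] at hw
    intro hzy
    have hmem : y ∈ ({z} - interior C) ∩ upCloE C A :=
      ⟨⟨z, rfl, z - y, hzy, sub_sub_cancel z y⟩, hy⟩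
    rw [hw.2] at hmem
    exact hmem

lemma upCloE_eq_empty_of_posInf_mem_infSE (h : posInf E ∈ infSE C A) : upCloE C A = ∅ := by
  unfold infSE at h
  split_ifs at h with huniv hempty
  · exact absurd (mem_singleton_iff.1 h) (by simp [posInf])
  · exact hempty
  · obtain ⟨w, -, hw⟩ := h
    exact absurd hw (toE_ne_posInf w)

variable [IsTopologicalAddGroup E]

lemma add_mem_upCloE (hCadd : C + C ⊆ C) {b k : E} (hb : b ∈ upCloE C A) (hk : k ∈ C) :
    b + k ∈ upCloE C A := by
  unfold upCloE at hb ⊢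
  split_ifs at hb ⊢
  · trivial
  · exact hb
  · refine map_mem_closure (f := (· + k)) (continuous_add_const k) hb ?_
    rintro _ ⟨w, hw, a, ha, rfl⟩
    exact ⟨w, hw, a + k, hCadd (add_mem_add ha hk), (add_assoc w a k).symm⟩

lemma sub_mem_loCloE (hCadd : C + C ⊆ C) {b k : E} (hb : b ∈ loCloE C A) (hk : k ∈ C) :
    b - k ∈ loCloE C A := by
  unfold loCloE at hb ⊢
  split_ifs at hb ⊢
  · trivial
  · exact hb
  · refine map_mem_closure (f := (· - k)) (continuous_sub_right k) hb ?_
    rintro _ ⟨w, hw, a, ha, rfl⟩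
    exact ⟨w, hw, a + k, hCadd (add_mem_add ha hk), (sub_sub w a k).symm⟩

lemma add_mem_upCloE_add {A₁ A₂ : Set (EY E)} {y z : E} (hy : toE y ∈ A₁)
    (hz : z ∈ upCloE C A₂) : y + z ∈ upCloE C (A₁ + A₂) := by
  unfold upCloE at hz
  split_ifs at hz with hbot
  · rw [upCloE_of_bot_mem (show ⊥ ∈ A₁ + A₂ from ⟨_, hy, ⊥, hbot, WithBot.add_bot _⟩)]
    trivial
  · exact absurd hz (notMem_empty z)
  · refine closure_preimage_add_subset_upCloE C _ <|
      map_mem_closure (f := (y + ·)) (continuous_const_add y) hz ?_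
    rintro _ ⟨w, hw, a, ha, rfl⟩
    exact ⟨y + w, by rw [mem_preimage, toE_add]; exact add_mem_add hy hw, a, ha,
      add_assoc y w a⟩

lemma add_mem_interior_of_add_subset (hCadd : C + C ⊆ C) {a b : E} (ha : a ∈ interior C)
    (hb : b ∈ C) : a + b ∈ interior C :=
  interior_maximal ((add_subset_add_right interior_subset).trans hCadd)
    isOpen_interior.add_right (add_mem_add ha hb)

lemma upCloE_subset_of_forall (hCadd : C + C ⊆ C) (hbot : ⊥ ∈ A → ⊥ ∈ A')
    (hmem : ∀ y, toE y ∈ A → y ∈ upCloE C A') : upCloE C A ⊆ upCloE C A' := by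
  conv_lhs => unfold upCloE
  split_ifs with hA
  · rw [upCloE_of_bot_mem (hbot hA)]
  · exact empty_subset _
  · refine closure_minimal ?_ (isClosed_upCloE C A')
    rintro _ ⟨y, hy, k, hk, rfl⟩
    exact add_mem_upCloE hCadd (hmem y hy) hk

lemma wMaxSet_eq_wMinSet_neg (C B : Set E) : wMaxSet C B = wMinSet (-C) B := by
  have h : interior (-C) = -interior C := ((Homeomorph.neg E).preimage_interior C).symm
  simp only [wMaxSet, wMinSet, h, sub_neg_eq_add]

end Closures

section Cones

variable {E : Type*} [AddCommGroup E] [Module ℝ E] {C : Set E} {c : E}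

lemma add_subset_of_convex_of_smul_subset (hC : Convex ℝ C)
    (hCone : ∀ r : ℝ, 0 < r → r • C ⊆ C) : C + C ⊆ C := by
  rintro _ ⟨a, ha, b, hb, rfl⟩
  have hmid : (2⁻¹ : ℝ) • a + (2⁻¹ : ℝ) • b ∈ C :=
    hC ha hb (by norm_num) (by norm_num) (by norm_num)
  convert hCone 2 two_pos (smul_mem_smul_set hmid) using 1
  module

lemma smul_neg_subset_neg (hCone : ∀ r : ℝ, 0 < r → r • C ⊆ C) :
    ∀ r : ℝ, 0 < r → r • -C ⊆ -C := fun r hr => by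
  rw [smul_set_neg, neg_subset_neg]
  exact hCone r hr

variable [TopologicalSpace E]

lemma smul_mem_interior_of_smul_subset [ContinuousConstSMul ℝ E]
    (hCone : ∀ r : ℝ, 0 < r → r • C ⊆ C) (hc : c ∈ interior C) {r : ℝ} (hr : 0 < r) :
    r • c ∈ interior C := by
  have h : r • c ∈ r • interior C := smul_mem_smul_set hc
  rw [← interior_smul₀ hr.ne'] at h
  exact interior_mono (hCone r hr) h

variable [IsTopologicalAddGroup E] [ContinuousSMul ℝ E]

lemma exists_pos_add_smul_mem (hCone : ∀ r : ℝ, 0 < r → r • C ⊆ C) (hc : c ∈ interior C)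
    (v : E) : ∃ t : ℝ, 0 < t ∧ v + t • c ∈ C := by
  have hlim : Tendsto (fun t : ℝ => c + t⁻¹ • v) atTop (𝓝 c) := by
    simpa using tendsto_const_nhds.add ((tendsto_inv_atTop_zero (𝕜 := ℝ)).smul_const v)
  obtain ⟨t, htC, ht⟩ :=
    ((hlim.eventually_mem (isOpen_interior.mem_nhds hc)).and (eventually_gt_atTop 0)).exists
  refine ⟨t, ht, ?_⟩
  convert hCone t ht (smul_mem_smul_set (interior_subset htC)) using 1
  rw [smul_add, smul_smul, mul_inv_cancel₀ ht.ne', one_smul, add_comm]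

lemma exists_pos_sub_smul_mem_interior {d : E} (hd : d ∈ interior C) :
    ∃ ε : ℝ, 0 < ε ∧ d - ε • c ∈ interior C := by
  have hlim : Tendsto (fun ε : ℝ => d - ε • c) (𝓝[>] 0) (𝓝 d) := by
    have hcont : Continuous fun ε : ℝ => d - ε • c := by fun_prop
    simpa using (hcont.tendsto 0).mono_left nhdsWithin_le_nhds
  obtain ⟨ε, hεC, hε⟩ :=
    ((hlim.eventually_mem (isOpen_interior.mem_nhds hd)).and self_mem_nhdsWithin).exists
  exact ⟨ε, hε, hεC⟩

lemma mem_closure_of_forall_add_smul_mem {S : Set E} {b : E}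
    (h : ∀ ε : ℝ, 0 < ε → b + ε • c ∈ S) : b ∈ closure S := by
  have hlim : Tendsto (fun ε : ℝ => b + ε • c) (𝓝[>] 0) (𝓝 b) := by
    have hcont : Continuous fun ε : ℝ => b + ε • c := by fun_prop
    simpa using (hcont.tendsto 0).mono_left nhdsWithin_le_nhds
  exact mem_closure_of_tendsto hlim (eventually_nhdsWithin_of_forall h)

lemma add_smul_mem_closure_add (hCone : ∀ r : ℝ, 0 < r → r • C ⊆ C) (hc : c ∈ interior C)
    {W : Set E} {m : E} (hm : m ∈ W) {s : ℝ} (hs : 0 ≤ s) : m + s • c ∈ closure (W + C) :=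
  mem_closure_of_forall_add_smul_mem (c := c) fun ε hε => ⟨m, hm, (s + ε) • c,
    interior_subset (smul_mem_interior_of_smul_subset hCone hc (by linarith)), by module⟩

lemma exists_le_sub_smul_mem_wMinSet (hCone : ∀ r : ℝ, 0 < r → r • C ⊆ C)
    (hc : c ∈ interior C) {B : Set E} (hB : IsClosed B) (hBC : ∀ b ∈ B, ∀ a ∈ C, b + a ∈ B)
    (hBne : B ≠ univ) {b : E} {t : ℝ} (ht : b - t • c ∈ B) :
    ∃ s, t ≤ s ∧ b - s • c ∈ wMinSet C B := by
  set T : Set ℝ := {s | b - s • c ∈ B}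
  have hdown : ∀ s ∈ T, ∀ s' ≤ s, s' ∈ T := by
    intro s hs s' hs'
    rcases hs'.eq_or_lt with rfl | hlt
    · exact hs
    · change b - s' • c ∈ B
      convert hBC _ hs _ (interior_subset (smul_mem_interior_of_smul_subset hCone hc
        (sub_pos.2 hlt))) using 1
      module
  have hbdd : BddAbove T := by
    refine not_not.1 fun hunbdd => hBne (eq_univ_of_forall fun z => ?_)
    obtain ⟨r, -, hr⟩ := exists_pos_add_smul_mem hCone hc (z - b)
    obtain ⟨s, hs, hrs⟩ := not_bddAbove_iff.1 hunbdd r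
    convert hBC _ (hdown s hs r hrs.le) _ hr using 1
    abel
  have hsT : sSup T ∈ T := (hB.preimage (by fun_prop)).csSup_mem ⟨t, ht⟩ hbdd
  refine ⟨sSup T, le_csSup hbdd ht, hsT, eq_empty_of_forall_notMem ?_⟩
  rintro _ ⟨⟨_, rfl, d, hd, rfl⟩, hmem⟩
  obtain ⟨ε, hε, hdε⟩ := exists_pos_sub_smul_mem_interior (c := c) hd
  have hεT : sSup T + ε ∈ T := by
    change b - (sSup T + ε) • c ∈ B
    convert hBC _ hmem _ (interior_subset hdε) using 1
    module
  linarith [le_csSup hbdd hεT]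

lemma mem_closure_wMinSet_add (hCone : ∀ r : ℝ, 0 < r → r • C ⊆ C) (hc : c ∈ interior C)
    {B : Set E} (hB : IsClosed B) (hBC : ∀ b ∈ B, ∀ a ∈ C, b + a ∈ B) (hBne : B ≠ univ)
    {b : E} (hb : b ∈ B) : b ∈ closure (wMinSet C B + C) := by
  obtain ⟨s, hs, hm⟩ :=
    exists_le_sub_smul_mem_wMinSet hCone hc hB hBC hBne (t := 0) (by simpa using hb)
  simpa using add_smul_mem_closure_add hCone hc hm hs

/-- Weakly maximal points for `C` are weakly minimal for `-C`, so the ray lemma applies to the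
cone `-C`; the resulting point lies above `y` because `y` is not interior to `B`. -/
lemma mem_closure_wMaxSet_add (hCone : ∀ r : ℝ, 0 < r → r • C ⊆ C) (hc : c ∈ interior C)
    {B : Set E} (hB : IsClosed B) (hBC : ∀ b ∈ B, ∀ a ∈ C, b - a ∈ B) (hBne : B ≠ univ)
    (hBnonempty : B.Nonempty) {y : E} (hy : y ∉ interior B) :
    y ∈ closure (wMaxSet C B + C) := by
  have hnc : -c ∈ interior (-C) :=
    ((Homeomorph.neg E).preimage_interior C) ▸ by simpa using hc
  obtain ⟨b, hb⟩ := hBnonempty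
  obtain ⟨t, -, ht⟩ := exists_pos_add_smul_mem hCone hc (b - y)
  have hyt : y - (-t) • -c ∈ B := by
    convert hBC b hb _ ht using 1
    module
  obtain ⟨s, -, hm⟩ := exists_le_sub_smul_mem_wMinSet (smul_neg_subset_neg hCone) hnc hB
    (fun b hb a ha => by simpa using hBC b hb (-a) ha) hBne hyt
  rw [← wMaxSet_eq_wMinSet_neg] at hm
  have hs : s ≤ 0 := by
    refine not_lt.1 fun hs => hy ?_
    refine interior_maximal (t := {y - s • -c} - interior C) ?_ isOpen_interior.sub_left
      ⟨_, rfl, s • c, smul_mem_interior_of_smul_subset hCone hc hs, ?_⟩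
    · rintro _ ⟨_, rfl, a, ha, rfl⟩
      exact hBC _ hm.1 _ (interior_subset ha)
    · module
  convert add_smul_mem_closure_add hCone hc hm (neg_nonneg.2 hs) using 1
  module

lemma mem_upCloE_of_toE_mem (hCone : ∀ r : ℝ, 0 < r → r • C ⊆ C) (hc : c ∈ interior C)
    {A : Set (EY E)} {y : E} (hy : toE y ∈ A) : y ∈ upCloE C A :=
  closure_preimage_add_subset_upCloE C A <| mem_closure_of_forall_add_smul_mem (c := c)
    fun _ hε => ⟨y, hy, _, interior_subset (smul_mem_interior_of_smul_subset hCone hc hε), rfl⟩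

lemma upCloE_infSE (hCone : ∀ r : ℝ, 0 < r → r • C ⊆ C) (hCadd : C + C ⊆ C)
    (hc : c ∈ interior C) (A : Set (EY E)) : upCloE C (infSE C A) = upCloE C A := by
  unfold infSE
  split_ifs with huniv hempty
  · rw [huniv, upCloE_of_bot_mem (mem_singleton _)]
  · rw [hempty, upCloE_singleton_posInf]
  · rw [upCloE_image_toE]
    refine subset_antisymm ?_ fun b hb => ?_
    · refine closure_minimal ?_ (isClosed_upCloE C A)
      rintro _ ⟨w, hw, k, hk, rfl⟩
      exact add_mem_upCloE hCadd hw.1 hk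
    · exact mem_closure_wMinSet_add hCone hc (isClosed_upCloE C A)
        (fun _ hb _ ha => add_mem_upCloE hCadd hb ha) huniv hb

lemma notMem_interior_closure_sub (hCone : ∀ r : ℝ, 0 < r → r • C ⊆ C) (hCadd : C + C ⊆ C)
    (hc : c ∈ interior C) {T : Set E} {y : E} (hT : ∀ z ∈ T, z - y ∉ interior C) :
    y ∉ interior (closure (T - C)) := by
  intro hy
  have hyC : y ∈ closure ({y} + interior C) := mem_closure_of_forall_add_smul_mem (c := c)
    fun _ hε => ⟨y, rfl, _, smul_mem_interior_of_smul_subset hCone hc hε, rfl⟩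
  obtain ⟨p, hpT, hpC⟩ := mem_closure_iff.1 hyC _ isOpen_interior hy
  obtain ⟨_, ⟨_, rfl, d, hd, rfl⟩, z, hz, k, hk, hzk⟩ :=
    mem_closure_iff.1 (interior_subset hpT) _ isOpen_interior.add_left hpC
  refine hT z hz ?_
  convert add_mem_interior_of_add_subset hCadd hd hk using 1
  rw [eq_add_of_sub_eq hzk, add_assoc, add_sub_cancel_left]

lemma mem_upCloE_supSE (hCone : ∀ r : ℝ, 0 < r → r • C ⊆ C) (hCadd : C + C ⊆ C)
    (hc : c ∈ interior C) {Q : Set (EY E)} {y : E} (hy : y ∉ interior (loCloE C Q)) :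
    y ∈ upCloE C (supSE C Q) := by
  unfold supSE
  split_ifs with huniv hempty
  · rw [huniv, interior_univ] at hy
    exact absurd (mem_univ y) hy
  · rw [upCloE_of_bot_mem (mem_singleton _)]
    trivial
  · rw [upCloE_image_toE]
    exact mem_closure_wMaxSet_add hCone hc (isClosed_loCloE C Q)
      (fun _ hb _ ha => sub_mem_loCloE hCadd hb ha) huniv (nonempty_iff_ne_empty.2 hempty) hy

end Cones

section Duality

variable {E ι V : Type*} [AddCommGroup E] [Module ℝ E] [TopologicalSpace E]
  [IsTopologicalAddGroup E] [ContinuousSMul ℝ E] [AddCommGroup V] [Module ℝ V]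
  [TopologicalSpace V] {C : Set E} {c : E}

lemma upCloE_feas_subset_upCloE_lagr (hCone : ∀ r : ℝ, 0 < r → r • C ⊆ C)
    (hCadd : C + C ⊆ C) (hc : c ∈ interior C) (F : ι → Set (EY E)) (G : ι → Set V)
    (D : Set V) (u' : V →L[ℝ] ℝ) :
    upCloE C (⋃ x ∈ feas G D, F x) ⊆ upCloE C (⋃ x, lagr C c F G D x u') := by
  have hzero : ∀ x ∈ feas G D,
      (0 : E) ∈ upCloE C (infSE C (⋃ u ∈ G x + D, {toE (u' u • c)})) := by
    rintro x ⟨u, huG, huD⟩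
    rw [upCloE_infSE hCone hCadd hc]
    refine mem_upCloE_of_toE_mem hCone hc (mem_biUnion (x := 0) ?_ (by simp))
    simpa using add_mem_add huG (mem_neg.1 huD)
  refine upCloE_subset_of_forall hCadd (fun hbot => ?_) fun y hy => ?_
  · obtain ⟨x, hx, hxbot⟩ := mem_iUnion₂.1 hbot
    obtain ⟨n, hn⟩ := nonempty_of_mem_upCloE (hzero x hx)
    exact mem_iUnion.2 ⟨x, WithBot.bot_add n ▸ add_mem_add hxbot hn⟩
  · obtain ⟨x, hx, hxy⟩ := mem_iUnion₂.1 hy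
    have hlagr : y + 0 ∈ upCloE C (lagr C c F G D x u') :=
      add_mem_upCloE_add hxy (hzero x hx)
    rw [add_zero] at hlagr
    exact upCloE_mono (subset_iUnion (fun x => lagr C c F G D x u') x) hlagr

end Duality

theorem stmt_15_general (C : Set Y) (c : Y) (hC : Convex ℝ C)
    (hCone : ∀ r : ℝ, 0 < r → r • C ⊆ C)
    (hc : c ∈ interior C)
    (F : X → Set (EY Y)) (G : X → Set U) (D : Set U) :
    upCloE C (infSE C (⋃ x ∈ feas G D, F x)) ⊆
      upCloE C (supSE C (⋃ u' : U →L[ℝ] ℝ, dualObj C c F G D u')) := by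
  have hCadd := add_subset_of_convex_of_smul_subset hC hCone
  rw [upCloE_infSE hCone hCadd hc]
  intro y hy
  have hlagr : ∀ u', y ∈ upCloE C (⋃ x, lagr C c F G D x u') := fun u' =>
    upCloE_feas_subset_upCloE_lagr hCone hCadd hc F G D u' hy
  have hposInf : posInf Y ∉ ⋃ u', dualObj C c F G D u' := fun h => by
    obtain ⟨u', hu'⟩ := mem_iUnion.1 h
    simpa [upCloE_eq_empty_of_posInf_mem_infSE hu'] using hlagr u'
  have hdual : ∀ z ∈ toE ⁻¹' ⋃ u', dualObj C c F G D u', z - y ∉ interior C := fun z hz => by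
    obtain ⟨u', hu'⟩ := mem_iUnion.1 hz
    exact sub_notMem_interior_of_mem_infSE hu' (hlagr u')
  exact mem_upCloE_supSE hCone hCadd hc fun hint => notMem_interior_closure_sub hCone hCadd hc
    hdual (interior_mono (loCloE_subset_closure hposInf) hint)

/-- Weak duality for the vector Lagrangian: the dual value is `≼` the primal value,
where `A ≼ B ⇔ Cl₊ A ⊇ Cl₊ B`. -/
theorem stmt_15 (C : Set Y) (c : Y) (hC : Convex ℝ C)
    (hCone : ∀ r : ℝ, 0 < r → r • C ⊆ C)
    (hInt : (interior C).Nonempty) (hIntNe : interior C ≠ univ)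
    (hc : c ∈ interior C)
    (F : X → Set (EY Y)) (G : X → Set U) (D : Set U)
    (hDcl : IsClosed D) (hDconv : Convex ℝ D)
    (hDcone : ∀ r : ℝ, 0 < r → r • D ⊆ D)
    (hDint : (interior D).Nonempty) (hDproper : D ≠ univ) :
    upCloE C (infSE C (⋃ x ∈ feas G D, F x)) ⊆
      upCloE C (supSE C (⋃ u' : U →L[ℝ] ℝ, dualObj C c F G D u')) :=
  stmt_15_general C c hC hCone hc F G D
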